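/- arXiv:2007.05377 — 2 statements merged into one kernel-verified Lean document; each statement's English description precedes it below -/
import Mathlib

section
/- Let n, r be positive integers, let U be a real n×r matrix with rows u_1, …, u_n, and for a finite set S ⊆ {1, …, n} let C_S denote the matrix whose rows are the rows u_i of U for i ∈ S. Fix ε > 0 and define the set function f_A(S) = −tr[(C_Sᵀ C_S + ε I)⁻¹] + r/ε. Then f_A is monotone increasing: for all S ⊆ T ⊆ {1, …, n}, f_A(S) ≤ f_A(T). -/
/-!
`C_Sᵀ C_S = ∑_{i ∈ S} u_i u_iᵀ` is monotone in `S` for the Loewner order, matrix inversion is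
antitone on positive definite matrices, and the trace is monotone; so `tr[(C_Sᵀ C_S + ε I)⁻¹]`
decreases as `S` grows.
-/

open Matrix

/-- The measurement matrix `C_S` whose rows are the rows `u_i` of `U` for `i ∈ S`. -/
def sensorMatrix {n r : ℕ} (U : Matrix (Fin n) (Fin r) ℝ) (S : Finset (Fin n)) :
    Matrix {i // i ∈ S} (Fin r) ℝ :=
  Matrix.of fun i j => U i.1 j

/-- The A-optimality objective `f_A(S) = -tr[(C_Sᵀ C_S + ε I)⁻¹] + r/ε`. -/
noncomputable def fA {n r : ℕ} (U : Matrix (Fin n) (Fin r) ℝ) (ε : ℝ)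
    (S : Finset (Fin n)) : ℝ :=
  - ((sensorMatrix U S)ᵀ * sensorMatrix U S
      + ε • (1 : Matrix (Fin r) (Fin r) ℝ))⁻¹.trace + r / ε

open scoped MatrixOrder ComplexOrder

theorem Matrix.PosDef.inv_anti {n 𝕜 : Type*} [Fintype n] [DecidableEq n] [RCLike 𝕜]
    {A B : Matrix n n 𝕜} (hA : A.PosDef) (hAB : A ≤ B) : B⁻¹ ≤ A⁻¹ := by
  obtain ⟨D, hD, rfl⟩ : ∃ D, D.PosSemidef ∧ B = A + D :=
    ⟨B - A, hAB, (add_sub_cancel A B).symm⟩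
  have hB : (A + D).PosDef := hA.add_posSemidef hD
  have : Invertible A := hA.isUnit.invertible
  have : Invertible (A + D) := hB.isUnit.invertible
  -- `A⁻¹ - B⁻¹ = B⁻¹ (B A⁻¹ B - B) B⁻¹` and `B A⁻¹ B - B = D A⁻¹ D + D` for `B = A + D`
  have hmid : (A + D) * A⁻¹ * (A + D) - (A + D) = Dᴴ * A⁻¹ * D + D := by
    rw [hD.isHermitian.eq]
    simp only [add_mul, mul_add, mul_inv_of_invertible, one_mul,
      inv_mul_cancel_right_of_invertible]
    abel
  have hdiff : A⁻¹ - (A + D)⁻¹ = ((A + D)⁻¹)ᴴ * (Dᴴ * A⁻¹ * D + D) * (A + D)⁻¹ := by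
    rw [← hmid, hB.inv.isHermitian.eq]
    simp only [sub_mul, mul_sub, Matrix.mul_assoc, inv_mul_cancel_left_of_invertible,
      mul_inv_of_invertible, mul_one]
  rw [Matrix.le_iff, hdiff]
  exact ((hA.inv.posSemidef.conjTranspose_mul_mul_same D).add hD).conjTranspose_mul_mul_same _

theorem transpose_sensorMatrix_mul_self {n r : ℕ} (U : Matrix (Fin n) (Fin r) ℝ)
    (S : Finset (Fin n)) :
    (sensorMatrix U S)ᵀ * sensorMatrix U S = ∑ i ∈ S, vecMulVec (U i) (U i) := by
  ext j k
  simp only [mul_apply, transpose_apply, sensorMatrix, of_apply, Matrix.sum_apply,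
    vecMulVec_apply]
  exact Finset.sum_coe_sort S fun i => U i j * U i k

theorem transpose_sensorMatrix_mul_self_mono {n r : ℕ} (U : Matrix (Fin n) (Fin r) ℝ) :
    Monotone fun S => (sensorMatrix U S)ᵀ * sensorMatrix U S := by
  intro S T hST
  simp only [transpose_sensorMatrix_mul_self]
  refine Finset.sum_le_sum_of_subset_of_nonneg hST fun i _ _ => ?_
  simpa [nonneg_iff_posSemidef] using posSemidef_vecMulVec_self_star (U i)

theorem fA_monotone_general {n r : ℕ}
    (U : Matrix (Fin n) (Fin r) ℝ) (ε : ℝ) (hε : 0 < ε)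
    (S T : Finset (Fin n)) (hST : S ⊆ T) :
    fA U ε S ≤ fA U ε T := by
  have hgram : ((sensorMatrix U S)ᵀ * sensorMatrix U S).PosSemidef := by
    simpa using posSemidef_conjTranspose_mul_self (sensorMatrix U S)
  have hεI : (ε • (1 : Matrix (Fin r) (Fin r) ℝ)).PosDef := PosDef.one.smul hε
  have hle := add_le_add_left (transpose_sensorMatrix_mul_self_mono U hST) (ε • 1)
  have hinv := (PosDef.posSemidef_add hgram hεI).inv_anti hle
  have htrace := OrderHomClass.mono (tracePositiveLinearMap (Fin r) ℝ ℝ) hinv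
  simp only [tracePositiveLinearMap_apply] at htrace
  simp only [fA]
  linarith

/-- The A-optimality objective `f_A` is monotone increasing. -/
theorem fA_monotone {n r : ℕ} (hn : 0 < n) (hr : 0 < r)
    (U : Matrix (Fin n) (Fin r) ℝ) (ε : ℝ) (hε : 0 < ε)
    (S T : Finset (Fin n)) (hST : S ⊆ T) :
    fA U ε S ≤ fA U ε T :=
  fA_monotone_general U ε hε S T hST
end

section
/- Let C be a real q×r matrix such that C Cᵀ is invertible, and let u ∈ ℝʳ be such that the scalar s := uᵀ(I − Cᵀ (C Cᵀ)⁻¹ C) u is nonzero. Let C' be the (q+1)×r matrix obtained by appending uᵀ as a new last row of C. Then C' C'ᵀ is invertible and tr[(C' C'ᵀ)⁻¹] = tr[(C Cᵀ)⁻¹] + (uᵀ Cᵀ (C Cᵀ)⁻² C u + 1)/s. -/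
/-!
Reindexing `Fin (q + 1)` as `Fin q ⊕ Fin 1` turns `C' C'ᵀ` into the bordered matrix
`[[C Cᵀ, C u], [(C u)ᵀ, uᵀ u]]`, whose Schur complement with respect to `C Cᵀ` is the scalar
`uᵀ u - (C u)ᵀ (C Cᵀ)⁻¹ (C u) = s`. The block inverse formula then gives
`tr (C' C'ᵀ)⁻¹ = tr (C Cᵀ)⁻¹ + s⁻¹ (C u)ᵀ (C Cᵀ)⁻² (C u) + s⁻¹`.
-/

open Matrix

namespace Matrix

variable {m n ι R : Type*}

theorem trace_submatrix_equiv [Fintype m] [Fintype n] [AddCommMonoid R]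
    (A : Matrix m m R) (e : n ≃ m) : (A.submatrix e e).trace = A.trace :=
  e.sum_comp fun i => A i i

theorem trace_inv_submatrix_equiv [Fintype m] [DecidableEq m] [Fintype n] [DecidableEq n]
    [CommRing R] (A : Matrix m m R) (e : n ≃ m) : (A.submatrix e e)⁻¹.trace = A⁻¹.trace := by
  rw [inv_submatrix_equiv, trace_submatrix_equiv]

theorem trace_fromBlocks [Fintype m] [Fintype n] [AddCommMonoid R]
    (A : Matrix m m R) (B : Matrix m n R) (C : Matrix n m R) (D : Matrix n n R) :
    (fromBlocks A B C D).trace = A.trace + D.trace :=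
  Fintype.sum_sum_type _

theorem dotProduct_mulVec_transpose_mul_mul [Fintype m] [Fintype n] [CommSemiring R]
    (C : Matrix m n R) (M : Matrix m m R) (u : n → R) :
    u ⬝ᵥ ((Cᵀ * M * C) *ᵥ u) = (C *ᵥ u) ⬝ᵥ (M *ᵥ (C *ᵥ u)) := by
  rw [Matrix.mul_assoc, ← mulVec_mulVec, dotProduct_mulVec, vecMul_transpose, ← mulVec_mulVec]

theorem submatrix_finSumFinEquiv_of_snoc {q : ℕ} (C : Matrix (Fin q) n R) (u : n → R) :
    (of (Fin.snoc C u) : Matrix (Fin (q + 1)) n R).submatrix finSumFinEquiv id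
      = fromRows C (replicateRow (Fin 1) u) := by
  ext (i | i) j
  · exact congrFun (Fin.snoc_castSucc (α := fun _ => n → R) ..) j
  · rw [Subsingleton.elim i 0]
    exact congrFun (Fin.snoc_last (α := fun _ => n → R) ..) j

theorem submatrix_finSumFinEquiv_mul_transpose_of_snoc [Fintype n] [CommSemiring R] {q : ℕ}
    (C : Matrix (Fin q) n R) (u : n → R) :
    ((of (Fin.snoc C u) : Matrix (Fin (q + 1)) n R) * (of (Fin.snoc C u))ᵀ).submatrix
        finSumFinEquiv finSumFinEquiv
      = fromBlocks (C * Cᵀ) (replicateCol (Fin 1) (C *ᵥ u)) (replicateRow (Fin 1) (C *ᵥ u))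
          (of fun _ _ => u ⬝ᵥ u) := by
  rw [← submatrix_mul_equiv _ _ finSumFinEquiv (Equiv.refl n) finSumFinEquiv, Equiv.coe_refl,
    ← transpose_submatrix, submatrix_finSumFinEquiv_of_snoc, transpose_fromRows,
    transpose_replicateRow, fromRows_mul_fromCols, ← replicateCol_mulVec, ← replicateRow_vecMul,
    vecMul_transpose, replicateRow_mul_replicateCol]

section Bordered

variable [Fintype m] [Field R]

theorem replicateRow_mul_mul_replicateCol (A : Matrix m m R) (b c : m → R) :
    replicateRow ι c * A * replicateCol ι b = of fun _ _ => c ⬝ᵥ (A *ᵥ b) := by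
  rw [Matrix.mul_assoc, ← replicateCol_mulVec, replicateRow_mul_replicateCol]

variable [DecidableEq m] [DecidableEq ι] [Unique ι]

theorem isUnit_fromBlocks_replicate_and_trace_inv (A : Matrix m m R) (b c : m → R) (d : R)
    (hA : IsUnit A) (hs : d - c ⬝ᵥ (A⁻¹ *ᵥ b) ≠ 0) :
    IsUnit (fromBlocks A (replicateCol ι b) (replicateRow ι c) (of fun _ _ => d)) ∧
      (fromBlocks A (replicateCol ι b) (replicateRow ι c) (of fun _ _ => d))⁻¹.trace
        = A⁻¹.trace + (c ⬝ᵥ ((A⁻¹ * A⁻¹) *ᵥ b) + 1) / (d - c ⬝ᵥ (A⁻¹ *ᵥ b)) := by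
  set s := d - c ⬝ᵥ (A⁻¹ *ᵥ b)
  let := hA.invertible
  have hschur : of (fun _ _ => d) - replicateRow ι c * ⅟A * replicateCol ι b = scalar ι s := by
    ext i j
    simp [invOf_eq_nonsing_inv, replicateRow_mul_mul_replicateCol, Subsingleton.elim i j, s]
  let := invertibleOfNonzero hs
  let : Invertible (of (fun _ _ => d) - replicateRow ι c * ⅟A * replicateCol ι b) :=
    (Invertible.map (scalar ι) s).copy _ hschur
  have hschur_inv : ⅟(of (fun _ _ => d) - replicateRow ι c * ⅟A * replicateCol ι b)
      = scalar ι s⁻¹ :=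
    invOf_eq_right_inv (by rw [hschur, ← map_mul, mul_inv_cancel₀ hs, map_one])
  let := fromBlocks₁₁Invertible A (replicateCol ι b) (replicateRow ι c) (of fun _ _ => d)
  refine ⟨isUnit_of_invertible _, ?_⟩
  have hmiddle : (A⁻¹ * replicateCol ι b * replicateRow ι c * A⁻¹).trace
      = c ⬝ᵥ ((A⁻¹ * A⁻¹) *ᵥ b) := by
    rw [trace_mul_cycle, ← replicateCol_mulVec, ← replicateCol_mulVec, mulVec_mulVec,
      trace_replicateCol_mul_replicateRow, dotProduct_comm]
  rw [← invOf_eq_nonsing_inv, invOf_fromBlocks₁₁_eq, trace_fromBlocks, hschur_inv]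
  simp only [scalar_apply, ← smul_one_eq_diagonal, Matrix.mul_smul, Matrix.smul_mul,
    Matrix.mul_one, trace_add, trace_smul, invOf_eq_nonsing_inv, hmiddle, smul_eq_mul, trace_one,
    Fintype.card_unique, Nat.cast_one, mul_one]
  ring

end Bordered

end Matrix

/-- Trace update rule of the A-optimality greedy method in the underdetermined case:
if `C Cᵀ` is invertible and `s = uᵀ(I − Cᵀ(C Cᵀ)⁻¹C)u ≠ 0`, then for the matrix `C'`
obtained by appending the new row `uᵀ` to `C`, the matrix `C' C'ᵀ` is invertible and
`tr[(C' C'ᵀ)⁻¹] = tr[(C Cᵀ)⁻¹] + (uᵀ Cᵀ (C Cᵀ)⁻² C u + 1)/s`. -/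
theorem trace_inv_row_append {q r : ℕ}
    (C : Matrix (Fin q) (Fin r) ℝ) (u : Fin r → ℝ)
    (hC : IsUnit (C * Cᵀ))
    (hs : u ⬝ᵥ (((1 : Matrix (Fin r) (Fin r) ℝ) - Cᵀ * (C * Cᵀ)⁻¹ * C) *ᵥ u) ≠ 0) :
    IsUnit ((Matrix.of (Fin.snoc C u) : Matrix (Fin (q + 1)) (Fin r) ℝ)
        * (Matrix.of (Fin.snoc C u) : Matrix (Fin (q + 1)) (Fin r) ℝ)ᵀ) ∧
      ((Matrix.of (Fin.snoc C u) : Matrix (Fin (q + 1)) (Fin r) ℝ)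
        * (Matrix.of (Fin.snoc C u) : Matrix (Fin (q + 1)) (Fin r) ℝ)ᵀ)⁻¹.trace
      = (C * Cᵀ)⁻¹.trace
        + (u ⬝ᵥ ((Cᵀ * ((C * Cᵀ)⁻¹ * (C * Cᵀ)⁻¹) * C) *ᵥ u) + 1)
          / (u ⬝ᵥ (((1 : Matrix (Fin r) (Fin r) ℝ) - Cᵀ * (C * Cᵀ)⁻¹ * C) *ᵥ u)) := by
  have hs_eq : u ⬝ᵥ ((1 - Cᵀ * (C * Cᵀ)⁻¹ * C) *ᵥ u)
      = u ⬝ᵥ u - (C *ᵥ u) ⬝ᵥ ((C * Cᵀ)⁻¹ *ᵥ (C *ᵥ u)) := by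
    rw [sub_mulVec, dotProduct_sub, one_mulVec, dotProduct_mulVec_transpose_mul_mul]
  rw [hs_eq] at hs ⊢
  obtain ⟨hunit, htrace⟩ := isUnit_fromBlocks_replicate_and_trace_inv (ι := Fin 1) _ _ _ _ hC hs
  rw [← submatrix_finSumFinEquiv_mul_transpose_of_snoc] at hunit htrace
  rw [trace_inv_submatrix_equiv, ← dotProduct_mulVec_transpose_mul_mul] at htrace
  exact ⟨(isUnit_submatrix_equiv _ _).mp hunit, htrace⟩
end
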